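/- For every nonnegative integer n, the sum over all pairs of nonnegative integers (i, j) with i + j = n of (B_{2i} − C_{2i}) · B_{2j} equals the sum over all pairs of nonnegative integers (i, j) with i + j = n and j ≥ 1 of B_{2i+1} · B_{2j−1}. -/

import Mathlib

/-!
Let `B(x) = ∑ Bₙ xⁿ = (1 - 4x)^(-1/2)` and `C(x) = ∑ Cₙ xⁿ`. Since `C = 1 + x C²`, the series
`u = 1 - 2x C` satisfies `u² = 1 - 4x`, and the recurrence `B_{n+1} + 2 Cₙ = 4 Bₙ` gives
`B (1 - 4x) = u`; hence `B u = 1`. The same relations at `-x` give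
`(C(x) + C(-x)) (u(x) + u(-x)) = 4`, so `4 B(x) B(-x) = (C(x) + C(-x)) (B(x) + B(-x))`.
Writing `f(x) = f₀(x²) + x f₁(x²)`, this says `B₀² - y B₁² = C₀ B₀`, i.e. `(B₀ - C₀) B₀ = y B₁²`,
and the coefficient of `yⁿ` is the claimed identity.
-/

theorem Nat.centralBinom_succ_add_two_mul_catalan (n : ℕ) :
    (n + 1).centralBinom + 2 * catalan n = 4 * n.centralBinom := by
  apply Nat.eq_of_mul_eq_mul_left (Nat.add_one_pos n)
  rw [Nat.mul_add, Nat.succ_mul_centralBinom_succ, mul_left_comm, succ_mul_catalan_eq_centralBinom]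
  ring

namespace PowerSeries

section EvenOdd

variable {R : Type*} [CommRing R]

noncomputable def evenPart (f : R⟦X⟧) : R⟦X⟧ := mk fun n => coeff (2 * n) f

noncomputable def oddPart (f : R⟦X⟧) : R⟦X⟧ := mk fun n => coeff (2 * n + 1) f

@[simp] theorem coeff_evenPart (f : R⟦X⟧) (n : ℕ) : coeff n (evenPart f) = coeff (2 * n) f :=
  coeff_mk _ _

@[simp] theorem coeff_oddPart (f : R⟦X⟧) (n : ℕ) : coeff n (oddPart f) = coeff (2 * n + 1) f :=
  coeff_mk _ _

theorem expand_injective (p : ℕ) (hp : p ≠ 0) : Function.Injective (expand p hp : R⟦X⟧ → R⟦X⟧) :=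
  fun f g h => ext fun n => by rw [← coeff_expand_mul p hp f n, h, coeff_expand_mul]

theorem coeff_two_mul_X_mul_expand_two (g : R⟦X⟧) (m : ℕ) :
    coeff (2 * m) (X * expand 2 two_ne_zero g) = 0 := by
  cases m with
  | zero => exact coeff_zero_X_mul _
  | succ m =>
    rw [show 2 * (m + 1) = 2 * m + 1 + 1 by ring, coeff_succ_X_mul,
      coeff_expand_of_not_dvd _ _ _ (by omega)]

theorem expand_evenPart_add_X_mul_expand_oddPart (f : R⟦X⟧) :
    expand 2 two_ne_zero (evenPart f) + X * expand 2 two_ne_zero (oddPart f) = f := by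
  ext n
  obtain ⟨m, rfl | rfl⟩ := Nat.even_or_odd' n
  · rw [map_add, coeff_two_mul_X_mul_expand_two, coeff_expand_mul, coeff_evenPart, add_zero]
  · rw [map_add, coeff_succ_X_mul, coeff_expand_mul, coeff_oddPart,
      coeff_expand_of_not_dvd _ _ _ (by omega), zero_add]

theorem evalNegHom_expand_two (g : R⟦X⟧) :
    evalNegHom (expand 2 two_ne_zero g) = expand 2 two_ne_zero g := by
  ext n
  rw [evalNegHom, coeff_rescale]
  obtain ⟨m, rfl | rfl⟩ := Nat.even_or_odd' n
  · rw [pow_mul, neg_one_sq, one_pow, one_mul]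
  · rw [coeff_expand_of_not_dvd _ _ _ (by omega), mul_zero]

theorem evalNegHom_eq (f : R⟦X⟧) :
    evalNegHom f = expand 2 two_ne_zero (evenPart f) - X * expand 2 two_ne_zero (oddPart f) := by
  conv_lhs => rw [← expand_evenPart_add_X_mul_expand_oddPart f]
  rw [map_add, map_mul, evalNegHom_X, evalNegHom_expand_two, evalNegHom_expand_two]
  ring

theorem add_evalNegHom (f : R⟦X⟧) : f + evalNegHom f = 2 * expand 2 two_ne_zero (evenPart f) := by
  rw [evalNegHom_eq]
  linear_combination (expand_evenPart_add_X_mul_expand_oddPart f).symm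

theorem mul_evalNegHom (f : R⟦X⟧) :
    f * evalNegHom f = expand 2 two_ne_zero (evenPart f ^ 2 - X * oddPart f ^ 2) := by
  rw [evalNegHom_eq, map_sub, map_mul, map_pow, map_pow, expand_X]
  linear_combination (expand 2 two_ne_zero (evenPart f) - X * expand 2 two_ne_zero (oddPart f)) *
    (expand_evenPart_add_X_mul_expand_oddPart f).symm

end EvenOdd

local notation "𝒞" => map (Nat.castRingHom ℤ) catalanSeries

noncomputable def centralBinomSeries : ℤ⟦X⟧ := mk fun n => (n.centralBinom : ℤ)

theorem map_catalanSeries_eq_one_add_X_mul_sq : 𝒞 = 1 + X * 𝒞 ^ 2 := by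
  have h := congrArg (map (Nat.castRingHom ℤ)) catalanSeries_sq_mul_X_add_one
  rw [map_add, map_mul, map_pow, map_X, map_one] at h
  linear_combination -h

theorem centralBinomSeries_eq_one_add_X_mul :
    centralBinomSeries = 1 + X * (4 * centralBinomSeries - 2 * 𝒞) := by
  ext n
  cases n with
  | zero => simp [centralBinomSeries]
  | succ n =>
    have h := congrArg (Nat.cast : ℕ → ℤ) (Nat.centralBinom_succ_add_two_mul_catalan n)
    push_cast at h
    rw [map_add, coeff_succ_X_mul, coeff_one, if_neg n.succ_ne_zero, zero_add, map_sub,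
      ← map_ofNat C 4, ← map_ofNat C 2, coeff_C_mul, coeff_C_mul]
    simp only [centralBinomSeries, coeff_mk, coeff_map, catalanSeries_coeff, eq_natCast]
    linear_combination h

theorem one_sub_two_mul_X_mul_map_catalanSeries_sq : (1 - 2 * X * 𝒞) ^ 2 = 1 - 4 * X := by
  linear_combination (-4 * X) * map_catalanSeries_eq_one_add_X_mul_sq

theorem centralBinomSeries_mul_one_sub_two_mul_X_mul_map_catalanSeries :
    centralBinomSeries * (1 - 2 * X * 𝒞) = 1 := by
  have hunit : IsUnit (1 - 2 * X * 𝒞) := by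
    simp [isUnit_iff_constantCoeff]
  refine hunit.mul_right_cancel ?_
  rw [one_mul, mul_assoc, ← sq, one_sub_two_mul_X_mul_map_catalanSeries_sq]
  linear_combination centralBinomSeries_eq_one_add_X_mul

theorem four_mul_centralBinomSeries_mul_evalNegHom :
    4 * (centralBinomSeries * evalNegHom centralBinomSeries) =
      (𝒞 + evalNegHom 𝒞) * (centralBinomSeries + evalNegHom centralBinomSeries) := by
  have hu := centralBinomSeries_mul_one_sub_two_mul_X_mul_map_catalanSeries
  have hu' := congrArg evalNegHom hu
  have hC := map_catalanSeries_eq_one_add_X_mul_sq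
  have hC' := congrArg evalNegHom hC
  simp only [map_mul, map_sub, map_add, map_one, map_pow, map_ofNat, evalNegHom_X] at hu' hC'
  linear_combination (-2 * centralBinomSeries * evalNegHom centralBinomSeries) * (hC + hC')
    + (𝒞 + evalNegHom 𝒞) * evalNegHom centralBinomSeries * hu
    + (𝒞 + evalNegHom 𝒞) * centralBinomSeries * hu'

theorem evenPart_centralBinomSeries_sub_mul :
    (evenPart centralBinomSeries - evenPart 𝒞) * evenPart centralBinomSeries =
      X * oddPart centralBinomSeries ^ 2 := by
  have h := four_mul_centralBinomSeries_mul_evalNegHom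
  rw [mul_evalNegHom, add_evalNegHom, add_evalNegHom,
    show ∀ a b : ℤ⟦X⟧, 2 * a * (2 * b) = 4 * (a * b) by intros; ring, ← map_mul] at h
  have h4 : (4 : ℤ⟦X⟧) ≠ 0 := fun h4 => by
    simpa [map_ofNat constantCoeff 4] using congrArg constantCoeff h4
  linear_combination expand_injective 2 two_ne_zero (mul_left_cancel₀ h4 h)

end PowerSeries

open PowerSeries

/-- For every nonnegative integer `n`,
`∑_{i+j=n} (B_{2i} − C_{2i}) B_{2j} = ∑_{i+j=n, j≥1} B_{2i+1} B_{2j−1}`. -/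
theorem sub_catalan_convolution (n : ℕ) :
    ∑ ij ∈ Finset.HasAntidiagonal.antidiagonal n,
        ((Nat.centralBinom (2 * ij.1) : ℤ) - catalan (2 * ij.1)) * Nat.centralBinom (2 * ij.2) =
      ∑ ij ∈ (Finset.HasAntidiagonal.antidiagonal n).filter (fun ij => 1 ≤ ij.2),
        (Nat.centralBinom (2 * ij.1 + 1) * Nat.centralBinom (2 * ij.2 - 1) : ℤ) := by
  have h := congrArg (coeff n) evenPart_centralBinomSeries_sub_mul
  rw [show ∀ f : ℤ⟦X⟧, X * f ^ 2 = f * (X ^ 1 * f) by intros; ring, coeff_mul, coeff_mul] at h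
  simp only [coeff_X_pow_mul', mul_ite, mul_zero, map_sub, coeff_evenPart, coeff_oddPart,
    centralBinomSeries, coeff_mk, coeff_map, catalanSeries_coeff, eq_natCast] at h
  rw [Finset.sum_filter, h]
  refine Finset.sum_congr rfl fun ij _ => ite_congr rfl (fun hj => ?_) fun _ => rfl
  rw [show 2 * (ij.2 - 1) + 1 = 2 * ij.2 - 1 by omega]
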